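/- Let (A, B, ψ, J, K) be a cylindrical bialgebra and set 𝕂 = R^ψ_{21}·(1⊗K)·R ∈ A ⊗ A. Then: (1) 𝕂·Δ(b) = (id⊗ψ)(Δ(b))·𝕂 for all b ∈ B; (2) (Δ⊗id)(𝕂) = R^ψ_{32}·𝕂_{13}·R_{23} in A^{⊗3}; (3) (id⊗Δ)(𝕂) = J^{-1}_{23}·𝕂_{13}·R^ψ_{23}·𝕂_{12} in A^{⊗3}; (4) (ε⊗id)(𝕂) = K. Consequently (A, B, ψ, J, 𝕂) is a reflection bialgebra if and only if 𝕂 ∈ B ⊗ A. -/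

import Mathlib

open TensorProduct

section Defs
variable (k A : Type*) [CommSemiring k] [Semiring A]

section Alg
variable [Algebra k A]

noncomputable def emb12 : A ⊗[k] A →ₐ[k] A ⊗[k] (A ⊗[k] A) :=
  Algebra.TensorProduct.map (AlgHom.id k A) Algebra.TensorProduct.includeLeft

noncomputable def emb13 : A ⊗[k] A →ₐ[k] A ⊗[k] (A ⊗[k] A) :=
  Algebra.TensorProduct.map (AlgHom.id k A) Algebra.TensorProduct.includeRight

noncomputable def emb23 : A ⊗[k] A →ₐ[k] A ⊗[k] (A ⊗[k] A) :=
  Algebra.TensorProduct.includeRight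

noncomputable def flip2 : A ⊗[k] A ≃ₐ[k] A ⊗[k] A := Algebra.TensorProduct.comm k A A

noncomputable def psiL (ψ : A ≃ₐ[k] A) : A ⊗[k] A →ₐ[k] A ⊗[k] A :=
  Algebra.TensorProduct.map ψ.toAlgHom (AlgHom.id k A)

noncomputable def psiR (ψ : A ≃ₐ[k] A) : A ⊗[k] A →ₐ[k] A ⊗[k] A :=
  Algebra.TensorProduct.map (AlgHom.id k A) ψ.toAlgHom

noncomputable def psiBoth (ψ : A ≃ₐ[k] A) : A ⊗[k] A →ₐ[k] A ⊗[k] A :=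
  Algebra.TensorProduct.map ψ.toAlgHom ψ.toAlgHom

noncomputable def sub2 (B : Subalgebra k A) : Submodule k (A ⊗[k] A) :=
  Submodule.span k {t : A ⊗[k] A | ∃ x ∈ B, ∃ y : A, t = x ⊗ₜ[k] y}

end Alg

variable [Bialgebra k A]

noncomputable def cop : A →ₐ[k] A ⊗[k] A := Bialgebra.comulAlgHom k A

noncomputable def copOp : A →ₐ[k] A ⊗[k] A := (flip2 k A).toAlgHom.comp (cop k A)

noncomputable def cou : A →ₐ[k] k := Bialgebra.counitAlgHom k A

noncomputable def copL : A ⊗[k] A →ₐ[k] A ⊗[k] (A ⊗[k] A) :=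
  (Algebra.TensorProduct.assoc k k k A A A).toAlgHom.comp
    (Algebra.TensorProduct.map (cop k A) (AlgHom.id k A))

noncomputable def copR : A ⊗[k] A →ₐ[k] A ⊗[k] (A ⊗[k] A) :=
  Algebra.TensorProduct.map (AlgHom.id k A) (cop k A)

noncomputable def couL : A ⊗[k] A →ₐ[k] A :=
  (Algebra.TensorProduct.lid k A).toAlgHom.comp
    (Algebra.TensorProduct.map (cou k A) (AlgHom.id k A))

noncomputable def couR : A ⊗[k] A →ₐ[k] A :=
  (Algebra.TensorProduct.rid k k A).toAlgHom.comp
    (Algebra.TensorProduct.map (AlgHom.id k A) (cou k A))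

structure QTriangular (R : A ⊗[k] A) : Prop where
  isUnit : IsUnit R
  intertwine : ∀ x : A, R * cop k A x = copOp k A x * R
  coproduct_left : copL k A R = emb13 k A R * emb23 k A R
  coproduct_right : copR k A R = emb13 k A R * emb12 k A R

end Defs

section QSP
variable (k A : Type*) [CommSemiring k] [Semiring A] [Bialgebra k A]

/-- A twist pair `(ψ, J)`: `J` is a Drinfeld twist and `A^{cop,ψ} = A_J` as
quasitriangular bialgebras. -/
structure TwistPair (R : A ⊗[k] A) (ψ : A ≃ₐ[k] A) (J Jinv : A ⊗[k] A) : Prop where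
  mul_inv : J * Jinv = 1
  inv_mul : Jinv * J = 1
  cocycle : emb12 k A J * copL k A J = emb23 k A J * copR k A J
  counit_left : couL k A J = 1
  counit_right : couR k A J = 1
  compat_coproduct : ∀ x : A, psiBoth k A ψ (copOp k A (ψ.symm x)) = J * cop k A x * Jinv
  compat_R : psiBoth k A ψ (flip2 k A R) = flip2 k A J * R * Jinv

/-- A cylindrical bialgebra `(A, B, ψ, J, K)`. -/
structure Cylindrical (R : A ⊗[k] A) (B : Subalgebra k A) (ψ : A ≃ₐ[k] A)
    (J Jinv : A ⊗[k] A) (K : A) : Prop where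
  qt : QTriangular k A R
  coideal : ∀ b ∈ B, cop k A b ∈ sub2 k A B
  twist : TwistPair k A R ψ J Jinv
  isUnitK : IsUnit K
  intertwine : ∀ b ∈ B, K * b = ψ b * K
  coproduct : cop k A K = Jinv * ((1 : A) ⊗ₜ[k] K) * psiL k A ψ R * (K ⊗ₜ[k] (1 : A))

/-- A reflection bialgebra `(A, B, ψ, J, 𝕂)`, the universal tensor K-matrix `𝕂` being
an element of `B ⊗ A ⊆ A ⊗ A`. -/
structure Reflection (R : A ⊗[k] A) (B : Subalgebra k A) (ψ : A ≃ₐ[k] A)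
    (J Jinv : A ⊗[k] A) (TK : A ⊗[k] A) : Prop where
  qt : QTriangular k A R
  coideal : ∀ b ∈ B, cop k A b ∈ sub2 k A B
  twist : TwistPair k A R ψ J Jinv
  support : TK ∈ sub2 k A B
  isUnitTK : IsUnit TK
  intertwine : ∀ b ∈ B, TK * cop k A b = psiR k A ψ (cop k A b) * TK
  coproduct_left : copL k A TK =
    emb23 k A (flip2 k A (psiL k A ψ R)) * emb13 k A TK * emb23 k A R
  coproduct_right : copR k A TK =
    emb23 k A Jinv * emb13 k A TK * emb23 k A (psiL k A ψ R) * emb12 k A TK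

end QSP

/-! 𝕂 = R^ψ₂₁ (1 ⊗ K) R is a product of three factors whose behaviour under Δ ⊗ id, id ⊗ Δ
and ε ⊗ id is known: the hexagon relations for R (and, after flipping and applying ψ, for
R^ψ₂₁), the formula for Δ(K), and the twist relation (ψ ⊗ ψ) Δ^op ψ⁻¹ = J Δ J⁻¹. The first
coproduct identity then holds by associativity alone. For the second, after J₂₃ J⁻¹₂₃ cancels
and the K-factors are moved past factors acting on other legs, what remains is the
Yang–Baxter equation in the form R^ψ₂₁,₁₂ R^ψ₂₃ R₁₃ = R₁₃ R^ψ₂₃ R^ψ₂₁,₁₂, obtained from the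
usual one by swapping the first two legs and applying ψ to the second. The intertwining
identity uses R Δ(b) = Δ^op(b) R and K b = ψ(b) K on the B-leg of Δ^op(b), and the counit
identity uses (ε ⊗ id) R = (id ⊗ ε) R = 1, which follow from the hexagon relations because
R is invertible. -/

section Legs
variable {k A : Type*} [CommSemiring k] [Semiring A] [Algebra k A]

@[simp] lemma emb12_tmul (x y : A) : emb12 k A (x ⊗ₜ[k] y) = x ⊗ₜ[k] (y ⊗ₜ[k] (1 : A)) := by
  simp [emb12]

@[simp] lemma emb13_tmul (x y : A) : emb13 k A (x ⊗ₜ[k] y) = x ⊗ₜ[k] ((1 : A) ⊗ₜ[k] y) := by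
  simp [emb13]

@[simp] lemma emb23_apply (u : A ⊗[k] A) : emb23 k A u = (1 : A) ⊗ₜ[k] u := rfl

@[simp] lemma flip2_tmul (x y : A) : flip2 k A (x ⊗ₜ[k] y) = y ⊗ₜ[k] x := rfl

@[simp] lemma psiL_tmul (ψ : A ≃ₐ[k] A) (x y : A) : psiL k A ψ (x ⊗ₜ[k] y) = ψ x ⊗ₜ[k] y := rfl

@[simp] lemma psiR_tmul (ψ : A ≃ₐ[k] A) (x y : A) : psiR k A ψ (x ⊗ₜ[k] y) = x ⊗ₜ[k] ψ y := rfl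

@[simp] lemma psiBoth_tmul (ψ : A ≃ₐ[k] A) (x y : A) :
    psiBoth k A ψ (x ⊗ₜ[k] y) = ψ x ⊗ₜ[k] ψ y := rfl

@[simp] lemma flip2_flip2 (X : A ⊗[k] A) : flip2 k A (flip2 k A X) = X :=
  (flip2 k A).symm_apply_apply X

lemma psiR_flip2 (ψ : A ≃ₐ[k] A) (X : A ⊗[k] A) :
    psiR k A ψ (flip2 k A X) = flip2 k A (psiL k A ψ X) := by
  induction X using TensorProduct.induction_on <;> simp_all

lemma commute_emb12_one_tmul_one_tmul (X : A ⊗[k] A) (a : A) :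
    Commute (emb12 k A X) ((1 : A) ⊗ₜ[k] ((1 : A) ⊗ₜ[k] a)) := by
  induction X using TensorProduct.induction_on with
  | zero => simp
  | tmul x y => simp [Commute, SemiconjBy]
  | add x y hx hy => simpa only [map_add] using hx.add_left hy

lemma commute_emb13_one_tmul_tmul_one (X : A ⊗[k] A) (a : A) :
    Commute (emb13 k A X) ((1 : A) ⊗ₜ[k] (a ⊗ₜ[k] (1 : A))) := by
  induction X using TensorProduct.induction_on with
  | zero => simp
  | tmul x y => simp [Commute, SemiconjBy]
  | add x y hx hy => simpa only [map_add] using hx.add_left hy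

end Legs

section Coalgebra
variable {k A : Type*} [CommSemiring k] [Semiring A] [Bialgebra k A]

@[simp] lemma couL_tmul (x y : A) : couL k A (x ⊗ₜ[k] y) = cou k A x • y := by
  simp [couL]

@[simp] lemma couR_tmul (x y : A) : couR k A (x ⊗ₜ[k] y) = cou k A y • x := by
  simp [couR]

@[simp] lemma copR_tmul (x y : A) : copR k A (x ⊗ₜ[k] y) = x ⊗ₜ[k] cop k A y := rfl

lemma copL_tmul (x y : A) :
    copL k A (x ⊗ₜ[k] y) = Algebra.TensorProduct.assoc k k k A A A (cop k A x ⊗ₜ[k] y) := rfl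

lemma copOp_apply (x : A) : copOp k A x = flip2 k A (cop k A x) := rfl

lemma couL_cop (x : A) : couL k A (cop k A x) = x := by
  have h : ∀ t : A ⊗[k] A, Algebra.TensorProduct.map (cou k A) (AlgHom.id k A) t =
      Coalgebra.counit.rTensor A t := by
    intro t
    induction t using TensorProduct.induction_on <;> simp_all [cou]
  simp [couL, h, cop, Coalgebra.rTensor_counit_comul]

lemma couR_cop (x : A) : couR k A (cop k A x) = x := by
  have h : ∀ t : A ⊗[k] A, Algebra.TensorProduct.map (AlgHom.id k A) (cou k A) t =
      Coalgebra.counit.lTensor A t := by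
    intro t
    induction t using TensorProduct.induction_on <;> simp_all [cou]
  simp [couR, h, cop, Coalgebra.lTensor_counit_comul]

lemma couL_flip2 (X : A ⊗[k] A) : couL k A (flip2 k A X) = couR k A X := by
  induction X using TensorProduct.induction_on <;> simp_all

lemma couR_psiL (ψ : A ≃ₐ[k] A) (X : A ⊗[k] A) :
    couR k A (psiL k A ψ X) = ψ (couR k A X) := by
  induction X using TensorProduct.induction_on <;> simp_all

end Coalgebra

section LegMaps
variable (k A : Type*) [CommSemiring k] [Semiring A] [Algebra k A]

noncomputable def rotL : A ⊗[k] (A ⊗[k] A) →ₐ[k] A ⊗[k] (A ⊗[k] A) :=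
  (Algebra.TensorProduct.assoc k k k A A A).toAlgHom.comp
    (Algebra.TensorProduct.comm k A (A ⊗[k] A)).toAlgHom

noncomputable def rotR : A ⊗[k] (A ⊗[k] A) →ₐ[k] A ⊗[k] (A ⊗[k] A) :=
  (rotL k A).comp (rotL k A)

noncomputable def swap23 : A ⊗[k] (A ⊗[k] A) →ₐ[k] A ⊗[k] (A ⊗[k] A) :=
  Algebra.TensorProduct.map (AlgHom.id k A) (flip2 k A).toAlgHom

noncomputable def swap12 : A ⊗[k] (A ⊗[k] A) →ₐ[k] A ⊗[k] (A ⊗[k] A) :=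
  (swap23 k A).comp (rotL k A)

noncomputable def psi2 (ψ : A ≃ₐ[k] A) : A ⊗[k] (A ⊗[k] A) →ₐ[k] A ⊗[k] (A ⊗[k] A) :=
  Algebra.TensorProduct.map (AlgHom.id k A) (psiL k A ψ)

noncomputable def psi3 (ψ : A ≃ₐ[k] A) : A ⊗[k] (A ⊗[k] A) →ₐ[k] A ⊗[k] (A ⊗[k] A) :=
  Algebra.TensorProduct.map (AlgHom.id k A) (psiR k A ψ)

noncomputable def psi23 (ψ : A ≃ₐ[k] A) : A ⊗[k] (A ⊗[k] A) →ₐ[k] A ⊗[k] (A ⊗[k] A) :=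
  Algebra.TensorProduct.map (AlgHom.id k A) (psiBoth k A ψ)

variable {k A}

@[simp] lemma rotL_tmul (a b c : A) :
    rotL k A (a ⊗ₜ[k] (b ⊗ₜ[k] c)) = b ⊗ₜ[k] (c ⊗ₜ[k] a) := rfl

@[simp] lemma rotR_tmul (a b c : A) :
    rotR k A (a ⊗ₜ[k] (b ⊗ₜ[k] c)) = c ⊗ₜ[k] (a ⊗ₜ[k] b) := rfl

@[simp] lemma swap23_tmul (x : A) (t : A ⊗[k] A) :
    swap23 k A (x ⊗ₜ[k] t) = x ⊗ₜ[k] flip2 k A t := rfl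

@[simp] lemma swap12_tmul (a b c : A) :
    swap12 k A (a ⊗ₜ[k] (b ⊗ₜ[k] c)) = b ⊗ₜ[k] (a ⊗ₜ[k] c) := rfl

variable (ψ : A ≃ₐ[k] A)

@[simp] lemma psi2_tmul (x : A) (t : A ⊗[k] A) :
    psi2 k A ψ (x ⊗ₜ[k] t) = x ⊗ₜ[k] psiL k A ψ t := rfl

@[simp] lemma psi3_tmul (x : A) (t : A ⊗[k] A) :
    psi3 k A ψ (x ⊗ₜ[k] t) = x ⊗ₜ[k] psiR k A ψ t := rfl

@[simp] lemma psi23_tmul (x : A) (t : A ⊗[k] A) :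
    psi23 k A ψ (x ⊗ₜ[k] t) = x ⊗ₜ[k] psiBoth k A ψ t := rfl

variable (X : A ⊗[k] A)

lemma rotL_emb12 : rotL k A (emb12 k A X) = emb13 k A (flip2 k A X) := by
  induction X using TensorProduct.induction_on <;> simp_all

lemma rotL_emb13 : rotL k A (emb13 k A X) = emb23 k A (flip2 k A X) := by
  induction X using TensorProduct.induction_on <;> simp_all [tmul_add]

lemma rotL_emb23 : rotL k A (emb23 k A X) = emb12 k A X := by
  induction X using TensorProduct.induction_on <;> simp_all [tmul_add]

lemma rotR_emb13 : rotR k A (emb13 k A X) = emb12 k A (flip2 k A X) := by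
  simp only [rotR, AlgHom.comp_apply, rotL_emb13, rotL_emb23]

lemma rotR_emb23 : rotR k A (emb23 k A X) = emb13 k A (flip2 k A X) := by
  simp only [rotR, AlgHom.comp_apply, rotL_emb23, rotL_emb12]

lemma swap23_emb12 : swap23 k A (emb12 k A X) = emb13 k A X := by
  induction X using TensorProduct.induction_on <;> simp_all

lemma swap23_emb13 : swap23 k A (emb13 k A X) = emb12 k A X := by
  induction X using TensorProduct.induction_on <;> simp_all

lemma swap12_emb12 : swap12 k A (emb12 k A X) = emb12 k A (flip2 k A X) := by
  simp only [swap12, AlgHom.comp_apply, rotL_emb12, swap23_emb13]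

lemma swap12_emb13 : swap12 k A (emb13 k A X) = emb23 k A X := by
  simp only [swap12, AlgHom.comp_apply, rotL_emb13, emb23_apply, swap23_tmul, flip2_flip2]

lemma swap12_emb23 : swap12 k A (emb23 k A X) = emb13 k A X := by
  simp only [swap12, AlgHom.comp_apply, rotL_emb23, swap23_emb12]

lemma psi2_emb12 : psi2 k A ψ (emb12 k A X) = emb12 k A (psiR k A ψ X) := by
  induction X using TensorProduct.induction_on <;> simp_all

lemma psi2_emb13 : psi2 k A ψ (emb13 k A X) = emb13 k A X := by
  induction X using TensorProduct.induction_on <;> simp_all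

lemma psi2_emb23 : psi2 k A ψ (emb23 k A X) = emb23 k A (psiL k A ψ X) := rfl

lemma psi3_emb13 : psi3 k A ψ (emb13 k A X) = emb13 k A (psiR k A ψ X) := by
  induction X using TensorProduct.induction_on <;> simp_all

lemma psi3_emb23 : psi3 k A ψ (emb23 k A X) = emb23 k A (psiR k A ψ X) := rfl

lemma psi23_emb12 : psi23 k A ψ (emb12 k A X) = emb12 k A (psiR k A ψ X) := by
  induction X using TensorProduct.induction_on <;> simp_all

lemma psi23_emb13 : psi23 k A ψ (emb13 k A X) = emb13 k A (psiR k A ψ X) := by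
  induction X using TensorProduct.induction_on <;> simp_all

end LegMaps

section CoproductLegs
variable {k A : Type*} [CommSemiring k] [Semiring A] [Bialgebra k A] (X : A ⊗[k] A)

lemma copL_flip2 : copL k A (flip2 k A X) = rotL k A (copR k A X) := by
  induction X using TensorProduct.induction_on with
  | zero => simp
  | tmul x y =>
    rw [flip2_tmul, copL_tmul, copR_tmul]
    induction cop k A y using TensorProduct.induction_on <;> simp_all [add_tmul, tmul_add]
  | add x y hx hy => simp only [map_add, hx, hy]

lemma copR_flip2 : copR k A (flip2 k A X) = rotR k A (copL k A X) := by
  induction X using TensorProduct.induction_on with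
  | zero => simp
  | tmul x y =>
    rw [flip2_tmul, copL_tmul, copR_tmul]
    induction cop k A x using TensorProduct.induction_on <;> simp_all [add_tmul, tmul_add]
  | add x y hx hy => simp only [map_add, hx, hy]

lemma copL_psiR (ψ : A ≃ₐ[k] A) : copL k A (psiR k A ψ X) = psi3 k A ψ (copL k A X) := by
  induction X using TensorProduct.induction_on with
  | zero => simp
  | tmul x y =>
    rw [psiR_tmul, copL_tmul, copL_tmul]
    induction cop k A x using TensorProduct.induction_on <;> simp_all [add_tmul]
  | add x y hx hy => simp only [map_add, hx, hy]

end CoproductLegs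

section CounitLegs
variable (k A : Type*) [CommSemiring k] [Semiring A] [Bialgebra k A]

noncomputable def cou1 : A ⊗[k] (A ⊗[k] A) →ₐ[k] A ⊗[k] A :=
  (Algebra.TensorProduct.lid k (A ⊗[k] A)).toAlgHom.comp
    (Algebra.TensorProduct.map (cou k A) (AlgHom.id k (A ⊗[k] A)))

noncomputable def cou3 : A ⊗[k] (A ⊗[k] A) →ₐ[k] A ⊗[k] A :=
  Algebra.TensorProduct.map (AlgHom.id k A) (couR k A)

variable {k A}

@[simp] lemma cou1_tmul (x : A) (t : A ⊗[k] A) : cou1 k A (x ⊗ₜ[k] t) = cou k A x • t := by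
  simp [cou1]

@[simp] lemma cou3_tmul (x : A) (t : A ⊗[k] A) :
    cou3 k A (x ⊗ₜ[k] t) = x ⊗ₜ[k] couR k A t := rfl

variable (X : A ⊗[k] A)

lemma cou1_copL : cou1 k A (copL k A X) = X := by
  induction X using TensorProduct.induction_on with
  | zero => simp
  | tmul x y =>
    have h (t : A ⊗[k] A) :
        cou1 k A (Algebra.TensorProduct.assoc k k k A A A (t ⊗ₜ[k] y)) = couL k A t ⊗ₜ[k] y := by
      induction t using TensorProduct.induction_on <;> simp_all [add_tmul, smul_tmul']
    rw [copL_tmul, h, couL_cop]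
  | add x y hx hy => simp only [map_add, hx, hy]

lemma cou1_emb13 : cou1 k A (emb13 k A X) = (1 : A) ⊗ₜ[k] couL k A X := by
  induction X using TensorProduct.induction_on <;> simp_all [tmul_add, tmul_smul]

lemma cou1_emb23 : cou1 k A (emb23 k A X) = X := by
  simp

lemma cou3_copR : cou3 k A (copR k A X) = X := by
  induction X using TensorProduct.induction_on <;> simp_all [couR_cop]

lemma cou3_emb13 : cou3 k A (emb13 k A X) = couR k A X ⊗ₜ[k] (1 : A) := by
  induction X using TensorProduct.induction_on <;> simp_all [add_tmul, tmul_smul, smul_tmul']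

lemma cou3_emb12 : cou3 k A (emb12 k A X) = X := by
  induction X using TensorProduct.induction_on <;> simp_all

end CounitLegs

namespace QTriangular
variable {k A : Type*} [CommSemiring k] [Semiring A] [Bialgebra k A] {R : A ⊗[k] A}
  (hR : QTriangular k A R)
include hR

lemma couR_eq_one : couR k A R = 1 := by
  have h := congrArg (cou3 k A) hR.coproduct_right
  rw [cou3_copR, map_mul, cou3_emb13, cou3_emb12] at h
  have h1 : couR k A R ⊗ₜ[k] (1 : A) = 1 :=
    hR.isUnit.mul_right_cancel (by rw [one_mul, ← h])
  simpa using congrArg (couR k A) h1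

lemma couL_eq_one : couL k A R = 1 := by
  have h := congrArg (cou1 k A) hR.coproduct_left
  rw [cou1_copL, map_mul, cou1_emb13, cou1_emb23] at h
  have h1 : (1 : A) ⊗ₜ[k] couL k A R = 1 :=
    hR.isUnit.mul_right_cancel (by rw [one_mul, ← h])
  simpa using congrArg (couL k A) h1

lemma flip2_mul_copOp (x : A) : flip2 k A R * copOp k A x = cop k A x * flip2 k A R := by
  simpa only [map_mul, copOp_apply, flip2_flip2] using congrArg (flip2 k A) (hR.intertwine x)

lemma copL_flip2_eq :
    copL k A (flip2 k A R) = emb23 k A (flip2 k A R) * emb13 k A (flip2 k A R) := by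
  rw [copL_flip2, hR.coproduct_right, map_mul, rotL_emb13, rotL_emb12]

lemma copR_flip2_eq :
    copR k A (flip2 k A R) = emb12 k A (flip2 k A R) * emb13 k A (flip2 k A R) := by
  rw [copR_flip2, hR.coproduct_left, map_mul, rotR_emb13, rotR_emb23]

lemma emb23_mul_copR (X : A ⊗[k] A) :
    emb23 k A R * copR k A X = swap23 k A (copR k A X) * emb23 k A R := by
  induction X using TensorProduct.induction_on with
  | zero => simp
  | tmul x y =>
    simp only [copR_tmul, swap23_tmul, emb23_apply, Algebra.TensorProduct.tmul_mul_tmul,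
      one_mul, mul_one, hR.intertwine y, copOp_apply]
  | add x y hx hy => simp only [map_add, mul_add, add_mul, hx, hy]

lemma yangBaxter :
    emb12 k A R * emb13 k A R * emb23 k A R = emb23 k A R * emb13 k A R * emb12 k A R := by
  have h := hR.emb23_mul_copR R
  rw [hR.coproduct_right, map_mul, swap23_emb13, swap23_emb12] at h
  rw [← h, mul_assoc]

lemma yangBaxter_psi (ψ : A ≃ₐ[k] A) :
    emb13 k A R * emb23 k A (psiL k A ψ R) * emb12 k A (flip2 k A (psiL k A ψ R)) =
      emb12 k A (flip2 k A (psiL k A ψ R)) * emb23 k A (psiL k A ψ R) * emb13 k A R := by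
  have h := congrArg (fun Y => psi2 k A ψ (swap12 k A Y)) hR.yangBaxter.symm
  simpa only [map_mul, swap12_emb12, swap12_emb13, swap12_emb23, psi2_emb12, psi2_emb13,
    psi2_emb23, psiR_flip2] using h

end QTriangular

namespace TwistPair
variable {k A : Type*} [CommSemiring k] [Semiring A] [Bialgebra k A] {R : A ⊗[k] A}
  {ψ : A ≃ₐ[k] A} {J Jinv : A ⊗[k] A} (hJ : TwistPair k A R ψ J Jinv)
include hJ

lemma cop_apply_psi (y : A) : cop k A (ψ y) = Jinv * psiBoth k A ψ (copOp k A y) * J := by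
  have h := hJ.compat_coproduct (ψ y)
  rw [ψ.symm_apply_apply] at h
  rw [h, ← mul_assoc Jinv, ← mul_assoc Jinv, hJ.inv_mul, one_mul, mul_assoc, hJ.inv_mul, mul_one]

lemma copR_psiR (X : A ⊗[k] A) :
    copR k A (psiR k A ψ X) =
      emb23 k A Jinv * psi23 k A ψ (swap23 k A (copR k A X)) * emb23 k A J := by
  induction X using TensorProduct.induction_on with
  | zero => simp
  | tmul x y =>
    simp only [psiR_tmul, copR_tmul, swap23_tmul, psi23_tmul, emb23_apply,
      Algebra.TensorProduct.tmul_mul_tmul, one_mul, mul_one, hJ.cop_apply_psi y, copOp_apply]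
  | add x y hx hy => simp only [map_add, mul_add, add_mul, hx, hy]

lemma copR_flip2_psiL (hR : QTriangular k A R) :
    copR k A (flip2 k A (psiL k A ψ R)) = emb23 k A Jinv * emb13 k A (flip2 k A (psiL k A ψ R)) *
      emb12 k A (flip2 k A (psiL k A ψ R)) * emb23 k A J := by
  rw [← psiR_flip2, hJ.copR_psiR, hR.copR_flip2_eq, map_mul, swap23_emb12, swap23_emb13,
    map_mul, psi23_emb13, psi23_emb12, psiR_flip2, ← mul_assoc (emb23 k A Jinv)]

end TwistPair

section KMatrix
variable {k A : Type*} [CommSemiring k] [Semiring A] [Bialgebra k A]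

variable (k A) in
noncomputable def kMatrix (R : A ⊗[k] A) (ψ : A ≃ₐ[k] A) (K : A) : A ⊗[k] A :=
  flip2 k A (psiL k A ψ R) * ((1 : A) ⊗ₜ[k] K) * R

lemma one_tmul_mul_flip2_of_mem_sub2 {B : Subalgebra k A} {ψ : A ≃ₐ[k] A} {K : A}
    (hK : ∀ b ∈ B, K * b = ψ b * K) {t : A ⊗[k] A} (ht : t ∈ sub2 k A B) :
    ((1 : A) ⊗ₜ[k] K) * flip2 k A t = psiR k A ψ (flip2 k A t) * ((1 : A) ⊗ₜ[k] K) := by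
  induction ht using Submodule.span_induction with
  | mem x hx =>
    obtain ⟨a, ha, b, rfl⟩ := hx
    simp only [flip2_tmul, psiR_tmul, Algebra.TensorProduct.tmul_mul_tmul, one_mul, mul_one,
      hK a ha]
  | zero => simp
  | add x y _ _ hx hy => simp only [map_add, mul_add, add_mul, hx, hy]
  | smul c x _ hx => simp only [map_smul, mul_smul_comm, smul_mul_assoc, hx]

namespace QTriangular
variable {R : A ⊗[k] A} (hR : QTriangular k A R) (ψ : A ≃ₐ[k] A)
include hR

lemma couL_kMatrix (K : A) : couL k A (kMatrix k A R ψ K) = K := by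
  rw [kMatrix, map_mul, map_mul, couL_flip2, couR_psiL, hR.couR_eq_one, hR.couL_eq_one,
    map_one, couL_tmul, map_one, one_smul, mul_one, one_mul]

lemma isUnit_kMatrix {K : A} (hK : IsUnit K) : IsUnit (kMatrix k A R ψ K) :=
  (((hR.isUnit.map (psiL k A ψ)).map (flip2 k A)).mul
    (hK.map (Algebra.TensorProduct.includeRight (R := k) (A := A)))).mul hR.isUnit

lemma copL_kMatrix (K : A) :
    copL k A (kMatrix k A R ψ K) =
      emb23 k A (flip2 k A (psiL k A ψ R)) * emb13 k A (kMatrix k A R ψ K) * emb23 k A R := by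
  have hσ : copL k A (flip2 k A (psiL k A ψ R)) =
      emb23 k A (flip2 k A (psiL k A ψ R)) * emb13 k A (flip2 k A (psiL k A ψ R)) := by
    rw [← psiR_flip2, copL_psiR, hR.copL_flip2_eq, map_mul, psi3_emb23, psi3_emb13]
  have hK : copL k A ((1 : A) ⊗ₜ[k] K) = (1 : A) ⊗ₜ[k] ((1 : A) ⊗ₜ[k] K) := by
    simp [copL_tmul, Algebra.TensorProduct.one_def]
  simp only [kMatrix, map_mul, hσ, hK, hR.coproduct_left, emb13_tmul, mul_assoc]

end QTriangular

namespace Cylindrical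
variable {R : A ⊗[k] A} {B : Subalgebra k A} {ψ : A ≃ₐ[k] A} {J Jinv : A ⊗[k] A} {K : A}
  (hC : Cylindrical k A R B ψ J Jinv K)
include hC

lemma kMatrix_mul_cop {b : A} (hb : b ∈ B) :
    kMatrix k A R ψ K * cop k A b = psiR k A ψ (cop k A b) * kMatrix k A R ψ K := by
  have hK : ((1 : A) ⊗ₜ[k] K) * copOp k A b = psiR k A ψ (copOp k A b) * ((1 : A) ⊗ₜ[k] K) :=
    one_tmul_mul_flip2_of_mem_sub2 hC.intertwine (hC.coideal b hb)
  have hσ : flip2 k A (psiL k A ψ R) * psiR k A ψ (copOp k A b) =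
      psiR k A ψ (cop k A b) * flip2 k A (psiL k A ψ R) := by
    simpa only [map_mul, psiR_flip2] using congrArg (psiR k A ψ) (hC.qt.flip2_mul_copOp b)
  calc kMatrix k A R ψ K * cop k A b
      = flip2 k A (psiL k A ψ R) * (((1 : A) ⊗ₜ[k] K) * copOp k A b) * R := by
        rw [kMatrix, mul_assoc _ R, hC.qt.intertwine, ← mul_assoc, mul_assoc _ _ (copOp k A b)]
    _ = psiR k A ψ (cop k A b) * kMatrix k A R ψ K := by
        rw [hK, ← mul_assoc, hσ, kMatrix, mul_assoc _ (flip2 k A _), mul_assoc]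

lemma copR_kMatrix :
    copR k A (kMatrix k A R ψ K) = emb23 k A Jinv * emb13 k A (kMatrix k A R ψ K) *
      emb23 k A (psiL k A ψ R) * emb12 k A (kMatrix k A R ψ K) := by
  have hK : copR k A ((1 : A) ⊗ₜ[k] K) = emb23 k A Jinv * ((1 : A) ⊗ₜ[k] ((1 : A) ⊗ₜ[k] K)) *
      emb23 k A (psiL k A ψ R) * ((1 : A) ⊗ₜ[k] (K ⊗ₜ[k] (1 : A))) := by
    rw [copR_tmul, hC.coproduct, ← emb23_apply, map_mul, map_mul, map_mul]
    rfl
  have hJ (z) : emb23 k A J * (emb23 k A Jinv * z) = z := by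
    rw [← mul_assoc, ← map_mul, hC.twist.mul_inv, map_one, one_mul]
  have hYB (z) : emb12 k A (flip2 k A (psiL k A ψ R)) * (emb23 k A (psiL k A ψ R) *
      (emb13 k A R * z)) = emb13 k A R * (emb23 k A (psiL k A ψ R) *
      (emb12 k A (flip2 k A (psiL k A ψ R)) * z)) := by
    simp only [← mul_assoc, hC.qt.yangBaxter_psi ψ]
  simp only [kMatrix, map_mul, hC.twist.copR_flip2_psiL hC.qt, hK, hC.qt.coproduct_right,
    emb13_tmul, emb12_tmul, mul_assoc, hJ,
    (commute_emb12_one_tmul_one_tmul (flip2 k A (psiL k A ψ R)) K).left_comm,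
    (commute_emb13_one_tmul_tmul_one R K).symm.left_comm, hYB]

end Cylindrical

end KMatrix

/-- Let `(A, B, ψ, J, K)` be a cylindrical bialgebra and set
`𝕂 = R^ψ₂₁ · (1 ⊗ K) · R`. Then `𝕂` satisfies the intertwining identity, the two
coproduct identities and `(ε ⊗ id)(𝕂) = K`; consequently `(A, B, ψ, J, 𝕂)` is a
reflection bialgebra if and only if `𝕂 ∈ B ⊗ A`. -/
theorem cylindrical_to_reflection
    {k A : Type*} [Field k] [Ring A] [Bialgebra k A]
    (R : A ⊗[k] A) (B : Subalgebra k A) (ψ : A ≃ₐ[k] A) (J Jinv : A ⊗[k] A) (K : A)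
    (hcyl : Cylindrical k A R B ψ J Jinv K)
    (TK : A ⊗[k] A)
    (hTK : TK = flip2 k A (psiL k A ψ R) * ((1 : A) ⊗ₜ[k] K) * R) :
    -- (1) intertwining identity
    (∀ b ∈ B, TK * cop k A b = psiR k A ψ (cop k A b) * TK) ∧
    -- (2) first coproduct identity
    (copL k A TK =
      emb23 k A (flip2 k A (psiL k A ψ R)) * emb13 k A TK * emb23 k A R) ∧
    -- (3) second coproduct identity
    (copR k A TK =
      emb23 k A Jinv * emb13 k A TK * emb23 k A (psiL k A ψ R) * emb12 k A TK) ∧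
    -- (4) (ε ⊗ id)(𝕂) = K
    (couL k A TK = K) ∧
    -- consequently: reflection bialgebra ⟺ support condition
    (Reflection k A R B ψ J Jinv TK ↔ TK ∈ sub2 k A B) := by
  obtain rfl : TK = kMatrix k A R ψ K := hTK
  have intertwine (b : A) (hb : b ∈ B) := hcyl.kMatrix_mul_cop hb
  have copL_eq := hcyl.qt.copL_kMatrix ψ K
  have copR_eq := hcyl.copR_kMatrix
  refine ⟨intertwine, copL_eq, copR_eq, hcyl.qt.couL_kMatrix ψ K, Reflection.support, fun hs => ?_⟩
  exact ⟨hcyl.qt, hcyl.coideal, hcyl.twist, hs, hcyl.qt.isUnit_kMatrix ψ hcyl.isUnitK,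
    intertwine, copL_eq, copR_eq⟩
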